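/- Let g : [0,∞) × Ω → ℝ be jointly measurable with g_s integrable for each s and ∫_0^t E|g_s| ds < ∞ for every t ≥ 0, and let h : [0,∞) × Ω → ℝ be jointly measurable and such that for (Lebesgue-)almost every s, h_s is a version of E[g_s | G_s]. Then the process M_t := E[ ∫_0^t g_s ds | G_t ] − ∫_0^t h_s ds has the G-martingale property: for all 0 ≤ t′ ≤ t, E[M_t | G_{t′}] = M_{t′} almost surely. (This is the claim, proved in the paper's Theorem on the semimartingale representation of the optimal filter, that E(∫_0^t 𝓛f(θ_s) ds | G_t) − ∫_0^t π_s(𝓛f) ds is a G_t-martingale.) -/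

import Mathlib

/-!
For `S ∈ G t'`, Fubini and the defining property of `hₛ` give
`∫_S M_t - ∫_S M_{t'} = ∫_{t'}^t (∫_S gₛ - ∫_S hₛ) ds = 0`, since `S ∈ G s` for `s ≥ t'`.
It remains to see that `M_{t'}` is `G t'`-measurable, i.e. that `X := ∫₀^{t'} hₛ ds` is, although
`h` is only jointly measurable for the ambient σ-algebra. This goes by duality: for bounded `Y`,
`E[Y X] = ∫ E[Y hₛ] ds = ∫ E[E[Y | G t'] hₛ] ds = E[E[Y | G t'] X]`, and testing this against
`Y = sign (X - E[X | G t'])` shows `E|X - E[X | G t']| = 0`.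
-/

open MeasureTheory Function Set

namespace MeasureTheory

variable {Ω α : Type*} {m mΩ : MeasurableSpace Ω} {μ : Measure Ω} [MeasurableSpace α]
  {ν : Measure α}

theorem integral_mul_condExp_eq_integral_condExp_mul [IsFiniteMeasure μ] (hm : m ≤ mΩ)
    {X Y : Ω → ℝ} {C : ℝ} (hX : Integrable X μ) (hY : AEStronglyMeasurable Y μ)
    (hYC : ∀ᵐ ω ∂μ, |Y ω| ≤ C) :
    ∫ ω, Y ω * μ[X|m] ω ∂μ = ∫ ω, μ[Y|m] ω * X ω ∂μ := by
  have hYn : ∀ᵐ ω ∂μ, ‖Y ω‖ ≤ C := by simpa only [Real.norm_eq_abs] using hYC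
  have hYi : Integrable Y μ := .of_bound hY C hYn
  have hEYC : ∀ᵐ ω ∂μ, ‖μ[Y|m] ω‖ ≤ C := by
    simpa only [Real.norm_eq_abs] using ae_bdd_abs_condExp_of_ae_bdd_abs (m := m) hYC
  calc ∫ ω, Y ω * μ[X|m] ω ∂μ = ∫ ω, μ[Y * μ[X|m]|m] ω ∂μ := (integral_condExp hm).symm
    _ = ∫ ω, μ[Y|m] ω * μ[X|m] ω ∂μ := integral_congr_ae <|
        condExp_mul_of_stronglyMeasurable_right stronglyMeasurable_condExp
          (integrable_condExp.bdd_mul hY hYn) hYi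
    _ = ∫ ω, μ[μ[Y|m] * X|m] ω ∂μ := (integral_congr_ae <|
        condExp_mul_of_stronglyMeasurable_left (stronglyMeasurable_condExp (m := m))
          (hX.bdd_mul (stronglyMeasurable_condExp.mono hm).aestronglyMeasurable hEYC) hX).symm
    _ = ∫ ω, μ[Y|m] ω * X ω ∂μ := integral_condExp hm

theorem condExp_ae_eq_self_of_ae_eq_condExp (hm : m ≤ mΩ) [SigmaFinite (μ.trim hm)]
    {m' : MeasurableSpace Ω} (hm' : m' ≤ m) {f g : Ω → ℝ} (hfg : f =ᵐ[μ] μ[g|m']) :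
    μ[f|m] =ᵐ[μ] f :=
  condExp_of_aestronglyMeasurable' hm
    ((stronglyMeasurable_condExp.mono hm').aestronglyMeasurable.congr hfg.symm)
    (integrable_condExp.congr hfg.symm)

theorem setIntegral_sub_eq_zero_of_ae_eq_condExp (hm : m ≤ mΩ) [SigmaFinite (μ.trim hm)]
    {g h : Ω → ℝ} (hg : Integrable g μ) (hhg : h =ᵐ[μ] μ[g|m]) {S : Set Ω}
    (hS : MeasurableSet[m] S) :
    ∫ ω in S, (g ω - h ω) ∂μ = 0 := by
  rw [integral_sub hg.integrableOn (integrable_condExp.congr hhg.symm).integrableOn,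
    setIntegral_congr_ae (hm S hS) (hhg.mono fun ω hω _ => hω), setIntegral_condExp hm hg hS,
    sub_self]

theorem condExp_ae_eq_self_of_forall_integral_mul [IsFiniteMeasure μ] (hm : m ≤ mΩ)
    {X : Ω → ℝ} (hX : Integrable X μ)
    (h : ∀ Y : Ω → ℝ, StronglyMeasurable Y → (∀ ω, |Y ω| ≤ 1) →
      ∫ ω, Y ω * X ω ∂μ = ∫ ω, μ[Y|m] ω * X ω ∂μ) :
    μ[X|m] =ᵐ[μ] X := by
  set E := μ[X|m]
  set X' := hX.1.mk X
  have hE : StronglyMeasurable E := stronglyMeasurable_condExp.mono hm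
  set Y : Ω → ℝ := fun ω => if E ω ≤ X' ω then 1 else -1
  have hYm : StronglyMeasurable Y :=
    (Measurable.ite (measurableSet_le hE.measurable hX.1.stronglyMeasurable_mk.measurable)
      measurable_const measurable_const).stronglyMeasurable
  have hYb : ∀ ω, |Y ω| ≤ 1 := fun ω => by simp only [Y]; split_ifs <;> simp
  have hYabs : ∀ ω, Y ω * (X' ω - E ω) = |X' ω - E ω| := fun ω => by
    simp only [Y]
    split_ifs with hω
    · rw [one_mul, abs_of_nonneg (sub_nonneg.2 hω)]
    · rw [abs_of_neg (sub_neg.2 (not_le.1 hω))]; ring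
  have hYX : ∀ᵐ ω ∂μ, Y ω * (X ω - E ω) = |X ω - E ω| := by
    filter_upwards [hX.1.ae_eq_mk] with ω hω
    rw [hω, hYabs]
  have hYn : ∀ᵐ ω ∂μ, ‖Y ω‖ ≤ 1 := .of_forall fun ω => (Real.norm_eq_abs _).trans_le (hYb ω)
  have hYi : Integrable (fun ω => Y ω * X ω) μ := hX.bdd_mul hYm.aestronglyMeasurable hYn
  have hYEi : Integrable (fun ω => Y ω * E ω) μ :=
    integrable_condExp.bdd_mul hYm.aestronglyMeasurable hYn
  have hL1 : ∫ ω, |X ω - E ω| ∂μ = 0 := by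
    rw [← integral_congr_ae hYX]
    simp_rw [mul_sub]
    rw [integral_sub hYi hYEi, h Y hYm hYb,
      integral_mul_condExp_eq_integral_condExp_mul hm hX hYm.aestronglyMeasurable
        (.of_forall hYb), sub_self]
  have h0 := (integral_eq_zero_iff_of_nonneg (fun ω => abs_nonneg _)
    (hX.sub integrable_condExp).abs).1 hL1
  filter_upwards [h0] with ω hω
  exact (sub_eq_zero.1 (abs_eq_zero.1 hω)).symm

theorem integrable_uncurry_of_lintegral_lt_top [SFinite μ] {F : α → Ω → ℝ}
    (hF : AEStronglyMeasurable (uncurry F) (ν.prod μ))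
    (h : ∫⁻ s, ∫⁻ ω, ‖F s ω‖ₑ ∂μ ∂ν < ⊤) : Integrable (uncurry F) (ν.prod μ) :=
  ⟨hF, by rwa [HasFiniteIntegral, lintegral_prod _ hF.enorm]⟩

theorem integrable_uncurry_of_ae_eq_condExp [SFinite μ] {G : α → MeasurableSpace Ω}
    {g h : α → Ω → ℝ} (hg : Integrable (uncurry g) (ν.prod μ))
    (hh : AEStronglyMeasurable (uncurry h) (ν.prod μ))
    (hhg : ∀ᵐ s ∂ν, h s =ᵐ[μ] μ[g s|G s]) :
    Integrable (uncurry h) (ν.prod μ) := by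
  refine (integrable_prod_iff hh).2
    ⟨?_, hg.integral_norm_prod_left.mono' hh.norm.integral_prod_right' ?_⟩
  · filter_upwards [hhg] with s hs
    exact integrable_condExp.congr hs.symm
  · filter_upwards [hhg] with s hs
    rw [Real.norm_of_nonneg (integral_nonneg fun _ => norm_nonneg _)]
    calc ∫ ω, ‖h s ω‖ ∂μ = ∫ ω, ‖μ[g s|G s] ω‖ ∂μ :=
          integral_congr_ae (hs.fun_comp norm)
      _ ≤ ∫ ω, ‖g s ω‖ ∂μ := integral_norm_condExp_le _

section Parametric

variable [SFinite ν] {F : α → Ω → ℝ}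

theorem integral_mul_integral_swap [SFinite μ] (hF : Integrable (uncurry F) (ν.prod μ))
    {Y : Ω → ℝ} {C : ℝ} (hY : AEStronglyMeasurable Y μ) (hYC : ∀ᵐ ω ∂μ, |Y ω| ≤ C) :
    ∫ ω, Y ω * ∫ s, F s ω ∂ν ∂μ = ∫ s, ∫ ω, Y ω * F s ω ∂μ ∂ν := by
  have hYF : Integrable (fun p : α × Ω => Y p.2 * uncurry F p) (ν.prod μ) :=
    hF.bdd_mul hY.comp_snd
      (Measure.quasiMeasurePreserving_snd.ae (by simpa only [Real.norm_eq_abs]))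
  simp_rw [← integral_const_mul]
  exact integral_integral_swap (f := fun ω s => Y ω * F s ω) hYF.swap

theorem setIntegral_integral_swap [SFinite μ] (hF : Integrable (uncurry F) (ν.prod μ))
    (S : Set Ω) :
    ∫ ω in S, ∫ s, F s ω ∂ν ∂μ = ∫ s, ∫ ω in S, F s ω ∂μ ∂ν :=
  integral_integral_swap (f := fun ω s => F s ω)
    (hF.mono_measure (Measure.prod_mono le_rfl Measure.restrict_le_self)).swap

theorem condExp_integral_ae_eq_self [IsFiniteMeasure μ] (hm : m ≤ mΩ)
    (hF : Integrable (uncurry F) (ν.prod μ)) (hFm : ∀ᵐ s ∂ν, μ[F s|m] =ᵐ[μ] F s) :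
    μ[fun ω => ∫ s, F s ω ∂ν|m] =ᵐ[μ] fun ω => ∫ s, F s ω ∂ν := by
  refine condExp_ae_eq_self_of_forall_integral_mul hm hF.integral_prod_right
    fun Y hY hY1 => ?_
  have hEY1 : ∀ᵐ ω ∂μ, |μ[Y|m] ω| ≤ 1 := ae_bdd_abs_condExp_of_ae_bdd_abs (.of_forall hY1)
  rw [integral_mul_integral_swap hF hY.aestronglyMeasurable (.of_forall hY1),
    integral_mul_integral_swap hF (stronglyMeasurable_condExp.mono hm).aestronglyMeasurable hEY1]
  refine integral_congr_ae ?_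
  filter_upwards [hFm, hF.prod_right_ae] with s hs hFs
  rw [← integral_mul_condExp_eq_integral_condExp_mul (X := F s) hm hFs hY.aestronglyMeasurable
    (.of_forall hY1)]
  refine integral_congr_ae ?_
  filter_upwards [hs] with ω hω
  rw [hω]

theorem setIntegral_condExp_integral_sub_integral [SFinite μ] (hm : m ≤ mΩ)
    [SigmaFinite (μ.trim hm)] {g h : α → Ω → ℝ} (hg : Integrable (uncurry g) (ν.prod μ))
    (hh : Integrable (uncurry h) (ν.prod μ)) {S : Set Ω} (hS : MeasurableSet[m] S) :
    ∫ ω in S, (μ[fun ω => ∫ s, g s ω ∂ν|m] ω - ∫ s, h s ω ∂ν) ∂μ =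
      ∫ s, ∫ ω in S, (g s ω - h s ω) ∂μ ∂ν := by
  have hgi : Integrable (fun ω => ∫ s, g s ω ∂ν) μ := hg.integral_prod_right
  have hhi : Integrable (fun ω => ∫ s, h s ω ∂ν) μ := hh.integral_prod_right
  rw [integral_sub integrable_condExp.integrableOn hhi.integrableOn,
    setIntegral_condExp hm hgi hS, ← integral_sub hgi.integrableOn hhi.integrableOn,
    ← setIntegral_integral_swap (F := fun s ω => g s ω - h s ω) (hg.sub hh)]
  refine integral_congr_ae (ae_restrict_of_ae ?_)
  filter_upwards [hg.prod_left_ae, hh.prod_left_ae] with ω hgω hhω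
  exact (integral_sub hgω hhω).symm

end Parametric

end MeasureTheory

/-- If `g` is jointly measurable with `gₛ` integrable and `∫₀ᵗ E|gₛ| ds < ∞`, and `hₛ`
is a version of `E[gₛ | G_s]` for a.e. `s ≥ 0`, then
`M_t := E[∫₀ᵗ gₛ ds | G_t] − ∫₀ᵗ hₛ ds` has the `G`-martingale property. -/
theorem condexp_integral_sub_integral_condexp_martingale
    {Ω : Type*} {m : MeasurableSpace Ω} (μ : Measure Ω) [IsProbabilityMeasure μ]
    (G : ℝ → MeasurableSpace Ω)
    (hG_le : ∀ t, G t ≤ m)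
    (hG_mono : ∀ s t, s ≤ t → G s ≤ G t)
    (g h : ℝ → Ω → ℝ)
    (hg_meas : Measurable (Function.uncurry g))
    (hg_int : ∀ s, 0 ≤ s → Integrable (g s) μ)
    (hg_int2 : ∀ t, 0 ≤ t → (∫⁻ s in Set.Ioc (0:ℝ) t, ∫⁻ ω, ‖g s ω‖₊ ∂μ) < ⊤)
    (hh_meas : Measurable (Function.uncurry h))
    (hh_ver : ∀ᵐ s ∂(volume : Measure ℝ), 0 ≤ s → h s =ᵐ[μ] μ[g s | G s])
    (M : ℝ → Ω → ℝ)
    (hM : ∀ t, 0 ≤ t →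
      M t =ᵐ[μ] fun ω =>
        (μ[fun ω' => ∫ s in (0:ℝ)..t, g s ω' | G t]) ω - ∫ s in (0:ℝ)..t, h s ω) :
    ∀ t' t, 0 ≤ t' → t' ≤ t → μ[M t | G t'] =ᵐ[μ] M t' := by
  intro t' t ht' htt'
  have hg_prod : ∀ u, 0 ≤ u → Integrable (uncurry g) ((volume.restrict (Ioc 0 u)).prod μ) :=
    fun u hu => integrable_uncurry_of_lintegral_lt_top hg_meas.aestronglyMeasurable (hg_int2 u hu)
  have hh_ver_Ioc : ∀ u, ∀ᵐ s ∂(volume.restrict (Ioc (0:ℝ) u)),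
      h s =ᵐ[μ] μ[g s|G s] ∧ s ∈ Ioc 0 u :=
    fun u => by
      filter_upwards [ae_restrict_of_ae hh_ver, ae_restrict_mem measurableSet_Ioc] with s hs hsu
      exact ⟨hs hsu.1.le, hsu⟩
  have hh_prod : ∀ u, 0 ≤ u → Integrable (uncurry h) ((volume.restrict (Ioc 0 u)).prod μ) :=
    fun u hu => integrable_uncurry_of_ae_eq_condExp (hg_prod u hu) hh_meas.aestronglyMeasurable
      ((hh_ver_Ioc u).mono fun _ => And.left)
  have hM_Ioc : ∀ u, 0 ≤ u → M u =ᵐ[μ] fun ω =>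
      μ[fun ω' => ∫ s in Ioc 0 u, g s ω'|G u] ω - ∫ s in Ioc 0 u, h s ω := fun u hu => by
    simpa only [intervalIntegral.integral_of_le hu] using hM u hu
  have hM_int : ∀ u, 0 ≤ u → Integrable (M u) μ := fun u hu =>
    (integrable_condExp.sub (hh_prod u hu).integral_prod_right).congr (hM_Ioc u hu).symm
  have hM_setIntegral : ∀ u, 0 ≤ u → ∀ S, MeasurableSet[G u] S →
      ∫ ω in S, M u ω ∂μ = ∫ s in Ioc 0 u, ∫ ω in S, (g s ω - h s ω) ∂μ := fun u hu S hS => by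
    rw [setIntegral_congr_ae (hG_le u S hS) ((hM_Ioc u hu).mono fun _ hω _ => hω)]
    exact setIntegral_condExp_integral_sub_integral (hG_le u) (hg_prod u hu) (hh_prod u hu) hS
  have hh_integral :
      μ[fun ω => ∫ s in Ioc 0 t', h s ω|G t'] =ᵐ[μ] fun ω => ∫ s in Ioc 0 t', h s ω := by
    refine condExp_integral_ae_eq_self (hG_le t') (hh_prod t' ht') ?_
    filter_upwards [hh_ver_Ioc t'] with s ⟨hs, hst'⟩
    exact condExp_ae_eq_self_of_ae_eq_condExp (hG_le t') (hG_mono s t' hst'.2) hs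
  refine (ae_eq_condExp_of_forall_setIntegral_eq (hG_le t') (hM_int t (ht'.trans htt'))
    (fun S _ _ => (hM_int t' ht').integrableOn) (fun S hS _ => ?_) ?_).symm
  · rw [hM_setIntegral t' ht' S hS, hM_setIntegral t (ht'.trans htt') S (hG_mono t' t htt' S hS)]
    refine (setIntegral_eq_of_subset_of_ae_sdiff_eq_zero measurableSet_Ioc.nullMeasurableSet
      (Ioc_subset_Ioc_right htt') ?_).symm
    filter_upwards [hh_ver] with s hs ⟨⟨hs0, _⟩, hst'⟩
    have ht's : t' ≤ s := le_of_lt (not_le.1 fun hst => hst' ⟨hs0, hst⟩)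
    exact setIntegral_sub_eq_zero_of_ae_eq_condExp (hG_le s) (hg_int s hs0.le) (hs hs0.le)
      (hG_mono t' s ht's S hS)
  · exact (stronglyMeasurable_condExp.aestronglyMeasurable.sub
      (stronglyMeasurable_condExp.aestronglyMeasurable.congr hh_integral)).congr
      (hM_Ioc t' ht').symm
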